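/- arXiv:2204.04072 — 10 statements merged into one kernel-verified Lean document; each statement's English description precedes it below -/
import Mathlib

section
/- Let N ≥ 1, let p : Fin N → ℝ be strictly positive, let d : Fin N → ℝ, and let a : Fin N → Fin N → ℝ be an arbitrary family of rates. Define the generator action (L x)_i = ∑_{j ≠ i} (a i j · x_j − a j i · x_i) for any vector x. Then the following algebraic identity holds: ∑_i ( 2 d_i (L d)_i / p_i − d_i² (L p)_i / p_i² ) = − ∑_i ∑_{j ≠ i} a i j · (d_i/p_i − d_j/p_j)² · p_j. (This expresses the time derivative of the squared local Fisher distance as minus a sum of Fisher information flows, one per rate.) -/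
/-!
Expanding the generator, the row sums split into a term carried by the rate `a i j` and a term
carried by the reverse rate `a j i`. Exchanging `i` and `j` in the latter puts every contribution
on `a i j`, and for each ordered pair the bracket is minus a perfect square:
`2 dᵢ dⱼ / pᵢ - dᵢ² pⱼ / pᵢ² - dⱼ² / pⱼ = -(dᵢ / pᵢ - dⱼ / pⱼ)² pⱼ`.
-/

open Finset

theorem sum_sum_filter_ne_comm {ι M : Type*} [Fintype ι] [DecidableEq ι] [AddCommMonoid M]
    (F : ι → ι → M) :
    ∑ i, ∑ j ∈ univ.filter (fun j => j ≠ i), F i j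
      = ∑ i, ∑ j ∈ univ.filter (fun j => j ≠ i), F j i :=
  sum_comm' fun i j => by simp [ne_comm]

theorem fisher_summand_eq {pᵢ pⱼ dᵢ dⱼ aᵢⱼ aⱼᵢ : ℝ} (hpᵢ : pᵢ ≠ 0) :
    2 * dᵢ * (aᵢⱼ * dⱼ - aⱼᵢ * dᵢ) / pᵢ - dᵢ ^ 2 * (aᵢⱼ * pⱼ - aⱼᵢ * pᵢ) / pᵢ ^ 2
      = aᵢⱼ * (2 * dᵢ * dⱼ / pᵢ - dᵢ ^ 2 * pⱼ / pᵢ ^ 2) - aⱼᵢ * (dᵢ ^ 2 / pᵢ) := by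
  field_simp
  ring

theorem fisher_flow_eq {pᵢ pⱼ dᵢ dⱼ aᵢⱼ : ℝ} (hpᵢ : pᵢ ≠ 0) (hpⱼ : pⱼ ≠ 0) :
    aᵢⱼ * (2 * dᵢ * dⱼ / pᵢ - dᵢ ^ 2 * pⱼ / pᵢ ^ 2) - aᵢⱼ * (dⱼ ^ 2 / pⱼ)
      = -(aᵢⱼ * (dᵢ / pᵢ - dⱼ / pⱼ) ^ 2 * pⱼ) := by
  field_simp
  ring

theorem fisher_flow_decomposition_general (N : ℕ)
    (p : Fin N → ℝ) (hp : ∀ i, 0 < p i) (d : Fin N → ℝ)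
    (a : Fin N → Fin N → ℝ)
    (L : (Fin N → ℝ) → (Fin N → ℝ))
    (hL : ∀ x i, L x i = ∑ j ∈ univ.filter (fun j => j ≠ i), (a i j * x j - a j i * x i)) :
    ∑ i, (2 * d i * L d i / p i - d i ^ 2 * L p i / p i ^ 2)
      = -∑ i, ∑ j ∈ univ.filter (fun j => j ≠ i),
          a i j * (d i / p i - d j / p j) ^ 2 * p j := by
  have hp₀ : ∀ i, p i ≠ 0 := fun i => (hp i).ne'
  calc ∑ i, (2 * d i * L d i / p i - d i ^ 2 * L p i / p i ^ 2)
      = ∑ i, ∑ j ∈ univ.filter (fun j => j ≠ i),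
          (a i j * (2 * d i * d j / p i - d i ^ 2 * p j / p i ^ 2) - a j i * (d i ^ 2 / p i)) := by
        refine sum_congr rfl fun i _ => ?_
        rw [hL, hL, mul_sum, mul_sum, sum_div, sum_div, ← sum_sub_distrib]
        exact sum_congr rfl fun j _ => fisher_summand_eq (hp₀ i)
    _ = ∑ i, ∑ j ∈ univ.filter (fun j => j ≠ i),
          (a i j * (2 * d i * d j / p i - d i ^ 2 * p j / p i ^ 2) - a i j * (d j ^ 2 / p j)) := by
        simp only [sum_sub_distrib]
        rw [sum_sum_filter_ne_comm fun i j => a j i * (d i ^ 2 / p i)]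
    _ = -∑ i, ∑ j ∈ univ.filter (fun j => j ≠ i), a i j * (d i / p i - d j / p j) ^ 2 * p j := by
        simp only [← sum_neg_distrib]
        exact sum_congr rfl fun i _ => sum_congr rfl fun j _ => fisher_flow_eq (hp₀ i) (hp₀ j)

/-- The time derivative of the squared local Fisher distance decomposes as
minus a sum of Fisher information flows, one per rate. -/
theorem fisher_flow_decomposition (N : ℕ) (hN : 1 ≤ N)
    (p : Fin N → ℝ) (hp : ∀ i, 0 < p i) (d : Fin N → ℝ)
    (a : Fin N → Fin N → ℝ)
    (L : (Fin N → ℝ) → (Fin N → ℝ))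
    (hL : ∀ x i, L x i = ∑ j ∈ univ.filter (fun j => j ≠ i), (a i j * x j - a j i * x i)) :
    ∑ i, (2 * d i * L d i / p i - d i ^ 2 * L p i / p i ^ 2)
      = -∑ i, ∑ j ∈ univ.filter (fun j => j ≠ i),
          a i j * (d i / p i - d j / p j) ^ 2 * p j :=
  fisher_flow_decomposition_general N p hp d a L hL
end

section
/- Let N ≥ 1, let p : Fin N → ℝ be strictly positive, let d : Fin N → ℝ, and let a : Fin N → Fin N → ℝ satisfy a i j ≥ 0 for all i ≠ j. Define (L x)_i = ∑_{j ≠ i} (a i j · x_j − a j i · x_i). Then ∑_i ( 2 d_i (L d)_i / p_i − d_i² (L p)_i / p_i² ) ≤ 0. (Markovian generators contract the local Fisher distance at every strictly positive point.) -/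
open Finset

/-!
Writing `r = d / p`, exchanging the order of summation in the outflow terms turns the rate of
change of the Fisher distance into minus a Dirichlet form, `-∑ i, ∑ j, a i j * p j * (r i - r j) ^ 2`,
each of whose off-diagonal terms is nonnegative for nonnegative rates and positive `p`.
-/

section

variable {ι : Type*} [Fintype ι]

-- The diagonal term vanishes, so summing over all `j` agrees with the sum over `j ≠ i`
-- and makes the exchange of summation a plain `sum_comm`.
def rateGenerator (a : ι → ι → ℝ) (x : ι → ℝ) (i : ι) : ℝ :=
  ∑ j, (a i j * x j - a j i * x i)

theorem rateGenerator_eq_sum_ne [DecidableEq ι] (a : ι → ι → ℝ) (x : ι → ℝ) (i : ι) :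
    rateGenerator a x i = ∑ j ∈ univ.filter (fun j => j ≠ i), (a i j * x j - a j i * x i) := by
  refine (sum_filter_of_ne fun j _ hj => ?_).symm
  rintro rfl
  exact hj (sub_self _)

theorem sum_fisher_rate_eq_neg_dirichlet (a : ι → ι → ℝ) {p : ι → ℝ} (hp : ∀ i, p i ≠ 0)
    (d : ι → ℝ) :
    ∑ i, (2 * d i * rateGenerator a d i / p i - d i ^ 2 * rateGenerator a p i / p i ^ 2)
      = -∑ i, ∑ j, a i j * p j * (d i / p i - d j / p j) ^ 2 := by
  have hexpand : ∀ i, 2 * d i * rateGenerator a d i / p i - d i ^ 2 * rateGenerator a p i / p i ^ 2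
      = ∑ j, (a i j * (2 * d i * d j / p i - d i ^ 2 * p j / p i ^ 2)
          - a j i * (d i ^ 2 / p i)) := by
    intro i
    simp only [rateGenerator, mul_sum, sum_div, ← sum_sub_distrib]
    refine sum_congr rfl fun j _ => ?_
    field_simp [hp]
    ring
  have hswap : ∑ i, ∑ j, a j i * (d i ^ 2 / p i) = ∑ i, ∑ j, a i j * (d j ^ 2 / p j) :=
    sum_comm
  calc _ = ∑ i, ∑ j, (a i j * (2 * d i * d j / p i - d i ^ 2 * p j / p i ^ 2)
          - a i j * (d j ^ 2 / p j)) := by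
        simp only [hexpand, sum_sub_distrib, hswap]
    _ = _ := by
        simp only [← sum_neg_distrib]
        refine sum_congr rfl fun i _ => sum_congr rfl fun j _ => ?_
        field_simp [hp]
        ring

theorem sum_fisher_rate_nonpos {a : ι → ι → ℝ} (ha : ∀ i j, i ≠ j → 0 ≤ a i j)
    {p : ι → ℝ} (hp : ∀ i, 0 < p i) (d : ι → ℝ) :
    ∑ i, (2 * d i * rateGenerator a d i / p i - d i ^ 2 * rateGenerator a p i / p i ^ 2)
      ≤ 0 := by
  rw [sum_fisher_rate_eq_neg_dirichlet a (fun i => (hp i).ne') d, neg_nonpos]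
  refine sum_nonneg fun i _ => sum_nonneg fun j _ => ?_
  obtain rfl | hij := eq_or_ne i j
  · simp
  · exact mul_nonneg (mul_nonneg (ha i j hij) (hp j).le) (sq_nonneg _)

end

theorem markovian_contracts_fisher_general (N : ℕ)
    (p : Fin N → ℝ) (hp : ∀ i, 0 < p i) (d : Fin N → ℝ)
    (a : Fin N → Fin N → ℝ) (ha : ∀ i j, i ≠ j → 0 ≤ a i j)
    (L : (Fin N → ℝ) → (Fin N → ℝ))
    (hL : ∀ x i, L x i = ∑ j ∈ univ.filter (fun j => j ≠ i), (a i j * x j - a j i * x i)) :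
    ∑ i, (2 * d i * L d i / p i - d i ^ 2 * L p i / p i ^ 2) ≤ 0 := by
  have hLa : L = rateGenerator a := by
    ext x i
    rw [hL, rateGenerator_eq_sum_ne]
  subst hLa
  exact sum_fisher_rate_nonpos ha hp d

/-- Markovian generators (all off-diagonal rates nonnegative) contract the
local Fisher distance at every strictly positive point. -/
theorem markovian_contracts_fisher (N : ℕ) (hN : 1 ≤ N)
    (p : Fin N → ℝ) (hp : ∀ i, 0 < p i) (d : Fin N → ℝ)
    (a : Fin N → Fin N → ℝ) (ha : ∀ i j, i ≠ j → 0 ≤ a i j)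
    (L : (Fin N → ℝ) → (Fin N → ℝ))
    (hL : ∀ x i, L x i = ∑ j ∈ univ.filter (fun j => j ≠ i), (a i j * x j - a j i * x i)) :
    ∑ i, (2 * d i * L d i / p i - d i ^ 2 * L p i / p i ^ 2) ≤ 0 :=
  markovian_contracts_fisher_general N p hp d a ha L hL
end

section
/- Let N ≥ 2 and let a : Fin N → Fin N → ℝ be a family of rates such that a i₀ j₀ < 0 for some pair i₀ ≠ j₀. Then there exist a strictly positive vector p : Fin N → ℝ with ∑_i p_i = 1 and a vector d : Fin N → ℝ with ∑_i d_i = 0 such that ∑_i ∑_{j ≠ i} a i j · (d_i/p_i − d_j/p_j)² · p_j < 0; equivalently, the local Fisher distance between p and p + d strictly increases under the generator with rates a. (Converse direction of Theorem 1: every non-Markovian generator dilates the Fisher metric at some point of the probability simplex.) -/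
/-!
Take `u = d / p` to be the indicator of `i₀` shifted by a constant (the shift, `p i₀`, makes
`∑ d = 0` and does not change the differences `u i - u j`). Then only the rates into and out of
`i₀` survive, and the dissipation is `∑_{j ≠ i₀} a i₀ j p j + p i₀ ∑_{i ≠ i₀} a i i₀`, which is
continuous in `p` and equals `a i₀ j₀ < 0` at the vertex `p = δ_{j₀}` of the simplex; moving
slightly towards the barycentre gives a strictly positive `p` at which it is still negative.
-/

open Finset Filter Topology

section

variable {ι : Type*} [Fintype ι] [DecidableEq ι]

/-- The dissipation `-2 · d/dt` of the local Fisher distance, written in terms of `u = d / p`. -/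
def fisherDissipation (a : ι → ι → ℝ) (p u : ι → ℝ) : ℝ :=
  ∑ i, ∑ j ∈ univ.filter (fun j => j ≠ i), a i j * (u i - u j) ^ 2 * p j

theorem fisherDissipation_indicator_sub (a : ι → ι → ℝ) (p : ι → ℝ) (k : ι) (c : ℝ) :
    fisherDissipation a p (fun i => (if i = k then 1 else 0) - c) =
      ∑ j ∈ univ.erase k, a k j * p j + p k * ∑ i ∈ univ.erase k, a i k := by
  have hsq : ∀ i j, j ≠ i →
      ((if i = k then (1 : ℝ) else 0) - c - ((if j = k then 1 else 0) - c)) ^ 2 =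
        (if i = k then 1 else 0) + (if j = k then 1 else 0) := by
    intro i j hji
    split_ifs with hi hj hj
    · exact absurd (hj.trans hi.symm) hji
    all_goals ring
  simp only [fisherDissipation, filter_ne']
  rw [← add_sum_erase _ _ (mem_univ k), mul_sum]
  congr 1
  · refine sum_congr rfl fun j hj => ?_
    rw [hsq k j (ne_of_mem_erase hj), if_pos rfl, if_neg (ne_of_mem_erase hj)]
    ring
  · refine sum_congr rfl fun i hi => ?_
    have hik := ne_of_mem_erase hi
    rw [sum_eq_single_of_mem k (mem_erase.2 ⟨hik.symm, mem_univ k⟩)]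
    · rw [hsq i k hik.symm, if_neg hik, if_pos rfl]
      ring
    · intro j hj hjk
      rw [hsq i j (ne_of_mem_erase hj), if_neg hik, if_neg hjk]
      ring

theorem sum_indicator_sub_mul_eq_zero {p : ι → ℝ} (hp : ∑ i, p i = 1) (k : ι) :
    ∑ i, ((if i = k then 1 else 0) - p k) * p i = 0 := by
  simp only [sub_mul, sum_sub_distrib, ← mul_sum, hp, ite_mul, one_mul, zero_mul, sum_ite_eq',
    if_pos (mem_univ k), mul_one, sub_self]

theorem Continuous.exists_pos_sum_eq_one_lt_zero_of_single {G : (ι → ℝ) → ℝ}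
    (hG : Continuous G) (j₀ : ι) (hj₀ : G (Pi.single j₀ 1) < 0) :
    ∃ p : ι → ℝ, (∀ i, 0 < p i) ∧ ∑ i, p i = 1 ∧ G p < 0 := by
  set n : ℝ := (Fintype.card ι : ℝ)
  have hn : 0 < n := by have := Fintype.card_pos_iff.2 ⟨j₀⟩; positivity
  let path : ℝ → ι → ℝ := fun t => (1 - t) • Pi.single j₀ 1 + (t / n) • 1
  have hneg : ∀ᶠ t in 𝓝[>] 0, G (path t) < 0 :=
    (show Continuous (fun t => G (path t)) by fun_prop).continuousWithinAt.tendsto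
      |>.eventually_lt_const (by simpa [path] using hj₀)
  obtain ⟨t, ht, ht0, ht1⟩ := (hneg.and (Ioo_mem_nhdsGT one_pos)).exists
  refine ⟨path t, fun i => ?_, ?_, ht⟩
  · have hsingle : 0 ≤ (Pi.single j₀ 1 : ι → ℝ) i := by
      rw [Pi.single_apply]; split_ifs <;> norm_num
    have : 0 ≤ (1 - t) * (Pi.single j₀ 1 : ι → ℝ) i := mul_nonneg (by linarith) hsingle
    have : 0 < t / n := by positivity
    simp only [path, Pi.add_apply, Pi.smul_apply, smul_eq_mul, Pi.one_apply, mul_one]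
    linarith
  · simp only [path, Pi.add_apply, Pi.smul_apply, smul_eq_mul, Pi.one_apply, mul_one,
      sum_add_distrib, ← mul_sum, sum_pi_single', if_pos (mem_univ j₀), sum_const, card_univ,
      nsmul_eq_mul]
    field_simp
    ring

end

theorem nonMarkovian_dilates_fisher_general (N : ℕ)
    (a : Fin N → Fin N → ℝ) (i₀ j₀ : Fin N) (hij : i₀ ≠ j₀) (ha : a i₀ j₀ < 0) :
    ∃ (p : Fin N → ℝ) (d : Fin N → ℝ),
      (∀ i, 0 < p i) ∧ (∑ i, p i = 1) ∧ (∑ i, d i = 0) ∧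
      ∑ i, ∑ j ∈ univ.filter (fun j => j ≠ i),
          a i j * (d i / p i - d j / p j) ^ 2 * p j < 0 := by
  let G : (Fin N → ℝ) → ℝ := fun p =>
    ∑ j ∈ univ.erase i₀, a i₀ j * p j + p i₀ * ∑ i ∈ univ.erase i₀, a i i₀
  have hG : G (Pi.single j₀ 1) = a i₀ j₀ := by
    simp [G, Pi.single_apply, hij, eq_comm]
  obtain ⟨p, hp, hp1, hGp⟩ :=
    (show Continuous G by fun_prop).exists_pos_sum_eq_one_lt_zero_of_single j₀ (hG ▸ ha)
  let u : Fin N → ℝ := fun i => (if i = i₀ then 1 else 0) - p i₀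
  refine ⟨p, fun i => u i * p i, hp, hp1, sum_indicator_sub_mul_eq_zero hp1 i₀, ?_⟩
  simp only [fun i => mul_div_cancel_right₀ (u i) (hp i).ne']
  exact (fisherDissipation_indicator_sub a p i₀ (p i₀)).trans_lt hGp

/-- Every non-Markovian generator (some negative rate) dilates the local
Fisher metric at some strictly positive point of the probability simplex. -/
theorem nonMarkovian_dilates_fisher (N : ℕ) (hN : 2 ≤ N)
    (a : Fin N → Fin N → ℝ) (i₀ j₀ : Fin N) (hij : i₀ ≠ j₀) (ha : a i₀ j₀ < 0) :
    ∃ (p : Fin N → ℝ) (d : Fin N → ℝ),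
      (∀ i, 0 < p i) ∧ (∑ i, p i = 1) ∧ (∑ i, d i = 0) ∧
      ∑ i, ∑ j ∈ univ.filter (fun j => j ≠ i),
          a i j * (d i / p i - d j / p j) ^ 2 * p j < 0 :=
  nonMarkovian_dilates_fisher_general N a i₀ j₀ hij ha
end

section
/- Let T ∈ ℝ^{N×N} be a column-stochastic matrix (nonnegative entries, ∑_i T_{ij} = 1 for all j), let π : Fin N → ℝ be strictly positive with (T π)_i > 0 for all i, and let d : Fin N → ℝ be arbitrary. Then ∑_i (T d)_i² / (T π)_i ≤ ∑_i d_i² / π_i. (Data-processing inequality for the Fisher/χ² quadratic form: the local Fisher distance contracts under every stochastic map.) -/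
/-!
Row by row, `(T d)ᵢ = ∑ⱼ Tᵢⱼ dⱼ` is bounded by Cauchy–Schwarz with the weights `Tᵢⱼ πⱼ`:
`(T d)ᵢ² ≤ (T π)ᵢ · ∑ⱼ Tᵢⱼ dⱼ² / πⱼ`. Dividing by `(T π)ᵢ`, summing over `i` and using that
the columns of `T` sum to one gives the inequality.
-/

open Finset

namespace Finset

variable {ι R : Type*} [Field R] [LinearOrder R] [IsStrictOrderedRing R]

theorem sq_sum_mul_le_sum_mul_mul_sum_mul_sq_div (s : Finset ι) {w π : ι → R} (d : ι → R)
    (hw : ∀ j ∈ s, 0 ≤ w j) (hπ : ∀ j ∈ s, 0 < π j) :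
    (∑ j ∈ s, w j * d j) ^ 2 ≤ (∑ j ∈ s, w j * π j) * ∑ j ∈ s, w j * (d j ^ 2 / π j) :=
  sum_sq_le_sum_mul_sum_of_sq_le_mul s
    (fun j hj => mul_nonneg (hw j hj) (hπ j hj).le)
    (fun j hj => mul_nonneg (hw j hj) (div_nonneg (sq_nonneg _) (hπ j hj).le))
    fun j hj => by
      rw [mul_mul_mul_comm, mul_div_cancel₀ _ (hπ j hj).ne', ← sq, mul_pow]

/-- Unlike `Finset.sq_sum_div_le_sum_sq_div`, the weights may vanish; if they all do, the
left-hand side is the junk value `x / 0 = 0`. -/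
theorem sq_sum_mul_div_sum_mul_le_sum_mul_sq_div (s : Finset ι) {w π : ι → R} (d : ι → R)
    (hw : ∀ j ∈ s, 0 ≤ w j) (hπ : ∀ j ∈ s, 0 < π j) :
    (∑ j ∈ s, w j * d j) ^ 2 / ∑ j ∈ s, w j * π j ≤ ∑ j ∈ s, w j * (d j ^ 2 / π j) :=
  div_le_of_le_mul₀ (sum_nonneg fun j hj => mul_nonneg (hw j hj) (hπ j hj).le)
    (sum_nonneg fun j hj => mul_nonneg (hw j hj) (div_nonneg (sq_nonneg _) (hπ j hj).le))
    (by rw [mul_comm]; exact sq_sum_mul_le_sum_mul_mul_sum_mul_sq_div s d hw hπ)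

end Finset

namespace Matrix

variable {ι κ R : Type*} [Fintype ι] [Fintype κ] [Field R] [LinearOrder R] [IsStrictOrderedRing R]

theorem sum_sq_mulVec_div_mulVec_le {T : Matrix ι κ R} (hT : ∀ i j, 0 ≤ T i j)
    (hTcol : ∀ j, ∑ i, T i j = 1) {π : κ → R} (hπ : ∀ j, 0 < π j) (d : κ → R) :
    ∑ i, (T *ᵥ d) i ^ 2 / (T *ᵥ π) i ≤ ∑ j, d j ^ 2 / π j :=
  calc ∑ i, (T *ᵥ d) i ^ 2 / (T *ᵥ π) i
      ≤ ∑ i, ∑ j, T i j * (d j ^ 2 / π j) := sum_le_sum fun i _ =>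
        sq_sum_mul_div_sum_mul_le_sum_mul_sq_div univ d (fun j _ => hT i j) fun j _ => hπ j
    _ = ∑ j, (∑ i, T i j) * (d j ^ 2 / π j) := by rw [sum_comm]; simp only [sum_mul]
    _ = ∑ j, d j ^ 2 / π j := by simp only [hTcol, one_mul]

end Matrix

theorem fisher_data_processing_general (N : ℕ)
    (T : Matrix (Fin N) (Fin N) ℝ)
    (hTnonneg : ∀ i j, 0 ≤ T i j) (hTcol : ∀ j, ∑ i, T i j = 1)
    (π : Fin N → ℝ) (hπ : ∀ i, 0 < π i)
    (d : Fin N → ℝ) :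
    ∑ i, (T.mulVec d i) ^ 2 / T.mulVec π i ≤ ∑ i, d i ^ 2 / π i :=
  Matrix.sum_sq_mulVec_div_mulVec_le hTnonneg hTcol hπ d

/-- Data-processing inequality for the Fisher/χ² quadratic form: the local
Fisher distance contracts under every column-stochastic map. -/
theorem fisher_data_processing (N : ℕ)
    (T : Matrix (Fin N) (Fin N) ℝ)
    (hTnonneg : ∀ i j, 0 ≤ T i j) (hTcol : ∀ j, ∑ i, T i j = 1)
    (π : Fin N → ℝ) (hπ : ∀ i, 0 < π i) (hTπ : ∀ i, 0 < T.mulVec π i)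
    (d : Fin N → ℝ) :
    ∑ i, (T.mulVec d i) ^ 2 / T.mulVec π i ≤ ∑ i, d i ^ 2 / π i :=
  fisher_data_processing_general N T hTnonneg hTcol π hπ d
end

section
/- Let N ≥ 2, M ≥ 1. Let π : Fin N → ℝ be a strictly positive probability vector and w : Fin M → ℝ a strictly positive probability vector. Let a : Fin N → Fin N → ℝ be rates such that a 0 1 < 0, a i j ≥ 0 for every off-diagonal pair (i,j) ≠ (0,1), and a 1 0 · π_0 + a 0 1 · π_1 ≥ 0. Then for every d : Fin N × Fin M → ℝ, ∑_{i ≠ j} ∑_α a i j · ( d_{(i,α)}/(π_i w_α) − d_{(j,α)}/(π_j w_α) )² · π_j w_α ≥ 0. (Core inequality of Theorem 2: although the generator a ⊗ 1 acting on the system plus ancilla is non-Markovian, the local Fisher distance does not increase at any point of the form π ⊗ w, so no revival of Fisher distance can be observed in the image of the evolution.) -/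
/-!
Along each ancilla index `α` the sum is a Dirichlet form `∑_{i ≠ j} a i j (x i - x j)² μ j`
with `μ j = π j w α`. Pairing the `(i, j)` and `(j, i)` terms turns it into a sum of
`(a i j μ j + a j i μ i) (x i - x j)²`, so only the two-way fluxes at `π` need to be
nonnegative: the single negative rate `a 0 1` is compensated within its pair by `a 1 0 π 0`.
-/

open Finset

section OffDiagonal

variable {ι : Type*} [Fintype ι] [DecidableEq ι]

theorem sum_offDiag_swap (f : ι → ι → ℝ) :
    ∑ i, ∑ j ∈ univ.filter (fun j => j ≠ i), f j i =
      ∑ i, ∑ j ∈ univ.filter (fun j => j ≠ i), f i j := by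
  simp only [sum_filter]
  rw [sum_comm]
  simp only [ne_comm]

theorem sum_offDiag_nonneg_of_pair_nonneg (f : ι → ι → ℝ)
    (hf : ∀ i j, i ≠ j → 0 ≤ f i j + f j i) :
    0 ≤ ∑ i, ∑ j ∈ univ.filter (fun j => j ≠ i), f i j := by
  have hpaired : 0 ≤ ∑ i, ∑ j ∈ univ.filter (fun j => j ≠ i), (f i j + f j i) :=
    sum_nonneg fun i _ => sum_nonneg fun j hj => hf i j (mem_filter.1 hj).2.symm
  simp only [sum_add_distrib, sum_offDiag_swap f] at hpaired
  linarith

theorem dirichletForm_nonneg (a : ι → ι → ℝ) (μ x : ι → ℝ)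
    (hflux : ∀ i j, i ≠ j → 0 ≤ a i j * μ j + a j i * μ i) :
    0 ≤ ∑ i, ∑ j ∈ univ.filter (fun j => j ≠ i), a i j * (x i - x j) ^ 2 * μ j := by
  refine sum_offDiag_nonneg_of_pair_nonneg _ fun i j hij => ?_
  have hpair : a i j * (x i - x j) ^ 2 * μ j + a j i * (x j - x i) ^ 2 * μ i =
      (a i j * μ j + a j i * μ i) * (x i - x j) ^ 2 := by ring
  rw [hpair]
  exact mul_nonneg (hflux i j hij) (sq_nonneg _)

end OffDiagonal

theorem twoWayFlux_nonneg {ι : Type*} (π : ι → ℝ) (hπ : ∀ i, 0 ≤ π i)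
    (a : ι → ι → ℝ) (i₀ i₁ : ι)
    (hpos : ∀ i j, i ≠ j → (i, j) ≠ (i₀, i₁) → 0 ≤ a i j)
    (hbal : 0 ≤ a i₁ i₀ * π i₀ + a i₀ i₁ * π i₁) (i j : ι) (hij : i ≠ j) :
    0 ≤ a i j * π j + a j i * π i := by
  by_cases h : (i, j) = (i₀, i₁)
  · obtain ⟨rfl, rfl⟩ := Prod.ext_iff.1 h
    linarith
  by_cases h' : (j, i) = (i₀, i₁)
  · obtain ⟨rfl, rfl⟩ := Prod.ext_iff.1 h'
    linarith
  exact add_nonneg (mul_nonneg (hpos i j hij h) (hπ j)) (mul_nonneg (hpos j i hij.symm h') (hπ i))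

theorem no_fisher_revival_on_image_general (N M : ℕ) [NeZero N]
    (π : Fin N → ℝ) (hπpos : ∀ i, 0 < π i)
    (w : Fin M → ℝ) (hwpos : ∀ α, 0 < w α)
    (a : Fin N → Fin N → ℝ)
    (hpos : ∀ i j : Fin N, i ≠ j → (i, j) ≠ ((0 : Fin N), (1 : Fin N)) → 0 ≤ a i j)
    (hbal : 0 ≤ a 1 0 * π 0 + a 0 1 * π 1)
    (d : Fin N × Fin M → ℝ) :
    0 ≤ ∑ i, ∑ j ∈ univ.filter (fun j => j ≠ i), ∑ α,
          a i j * (d (i, α) / (π i * w α) - d (j, α) / (π j * w α)) ^ 2 * (π j * w α) := by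
  rw [sum_congr rfl fun _ _ => sum_comm, sum_comm]
  refine sum_nonneg fun α _ => dirichletForm_nonneg a (fun j => π j * w α) _ fun i j hij => ?_
  have hflux := twoWayFlux_nonneg π (fun i => (hπpos i).le) a 0 1 hpos hbal i j hij
  have hscaled : a i j * (π j * w α) + a j i * (π i * w α) =
      (a i j * π j + a j i * π i) * w α := by ring
  rw [hscaled]
  exact mul_nonneg hflux (hwpos α).le

/-- Core inequality of Theorem 2 (single copy): although the generator
`a ⊗ 1` on system plus ancilla is non-Markovian (`a 0 1 < 0`), the local Fisher distance
does not increase at any product point `π ⊗ w`, provided `a 1 0 · π 0 + a 0 1 · π 1 ≥ 0`. -/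
theorem no_fisher_revival_on_image (N M : ℕ) [NeZero N] (hN : 2 ≤ N) (hM : 1 ≤ M)
    (π : Fin N → ℝ) (hπpos : ∀ i, 0 < π i) (hπsum : ∑ i, π i = 1)
    (w : Fin M → ℝ) (hwpos : ∀ α, 0 < w α) (hwsum : ∑ α, w α = 1)
    (a : Fin N → Fin N → ℝ)
    (hneg : a 0 1 < 0)
    (hpos : ∀ i j : Fin N, i ≠ j → (i, j) ≠ ((0 : Fin N), (1 : Fin N)) → 0 ≤ a i j)
    (hbal : 0 ≤ a 1 0 * π 0 + a 0 1 * π 1)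
    (d : Fin N × Fin M → ℝ) :
    0 ≤ ∑ i, ∑ j ∈ univ.filter (fun j => j ≠ i), ∑ α,
          a i j * (d (i, α) / (π i * w α) - d (j, α) / (π j * w α)) ^ 2 * (π j * w α) :=
  no_fisher_revival_on_image_general N M π hπpos w hwpos a hpos hbal d
end

section
/- Let N ≥ 2, and let n ≥ 1 and M ≥ 1. Let π : Fin N → ℝ and q : Fin M → ℝ be strictly positive probability vectors, and define the product weights P(𝐣,α) = (∏_{l} π_{𝐣(l)}) · q_α for 𝐣 : Fin n → Fin N and α : Fin M. Let a : Fin N → Fin N → ℝ be rates with a 0 1 < 0, a i j ≥ 0 for every off-diagonal (i,j) ≠ (0,1), and a 1 0 · π_0 + a 0 1 · π_1 ≥ 0. Then for every d : (Fin n → Fin N) × Fin M → ℝ, ∑_{l : Fin n} ∑_{𝐣} ∑_{i ≠ 𝐣(l)} ∑_α a i (𝐣(l)) · ( d(update(𝐣,l,i),α)/P(update(𝐣,l,i),α) − d(𝐣,α)/P(𝐣,α) )² · P(𝐣,α) ≥ 0, where update(𝐣,l,i) is the string 𝐣 with its l-th entry replaced by i. (Many-copy version of Theorem 2: n copies of the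 channel plus an ancilla still cannot witness this non-Markovian generator via Fisher-distance revivals at points of the form π^{⊗n} ⊗ q.) -/
/-!
Fix the copy index `l`. Splitting a string `js` into its `l`-th letter `k` and the remaining
letters `g`, the product weight factors as `π k * c` with `c = (∏ π (g j)) * q α ≥ 0`, so for each
`g` and `α` the `l`-th summand is a single-system form `∑ₖ ∑_{i ≠ k} a i k (x i - x k)² w k`
with `w k = π k * c`. Pairing the terms `(i, k)` and `(k, i)` turns such a form into
`½ ∑ (a i k w k + a k i w i) (x i - x k)²`, whose coefficients are nonnegative: for
`{i, k} = {0, 1}` this is the balance condition scaled by `c`, otherwise both rates are.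
-/

open Finset

section RateForm

variable {ι : Type*}

theorem conductance_nonneg_of_balanced (a : ι → ι → ℝ) (w : ι → ℝ) (u v : ι)
    (hw : ∀ i, 0 ≤ w i) (hpos : ∀ i j, i ≠ j → (i, j) ≠ (u, v) → 0 ≤ a i j)
    (hbal : 0 ≤ a v u * w u + a u v * w v) {i k : ι} (hik : i ≠ k) :
    0 ≤ a i k * w k + a k i * w i := by
  by_cases hik' : (i, k) = (u, v)
  · obtain ⟨rfl, rfl⟩ := Prod.ext_iff.mp hik'
    linarith
  by_cases hki : (k, i) = (u, v)
  · obtain ⟨rfl, rfl⟩ := Prod.ext_iff.mp hki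
    linarith
  exact add_nonneg (mul_nonneg (hpos i k hik hik') (hw k))
    (mul_nonneg (hpos k i hik.symm hki) (hw i))

theorem sum_rate_mul_sq_sub_nonneg [Fintype ι] [DecidableEq ι] (a : ι → ι → ℝ) (w x : ι → ℝ)
    (hcond : ∀ i k, i ≠ k → 0 ≤ a i k * w k + a k i * w i) :
    0 ≤ ∑ k, ∑ i ∈ univ.filter (fun i => i ≠ k), a i k * (x i - x k) ^ 2 * w k := by
  set f : ι → ι → ℝ := fun i k => a i k * (x i - x k) ^ 2 * w k
  have hdiag : ∑ k, ∑ i ∈ univ.filter (fun i => i ≠ k), f i k = ∑ k, ∑ i, f i k :=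
    sum_congr rfl fun k _ => sum_filter_of_ne fun i _ h => by rintro rfl; simp [f] at h
  have hsymm : 2 * ∑ k, ∑ i, f i k
      = ∑ k, ∑ i, (a i k * w k + a k i * w i) * (x i - x k) ^ 2 := by
    rw [two_mul]
    nth_rewrite 2 [sum_comm]
    simp only [← sum_add_distrib, f]
    exact sum_congr rfl fun k _ => sum_congr rfl fun i _ => by ring
  have hterm : ∀ k i, 0 ≤ (a i k * w k + a k i * w i) * (x i - x k) ^ 2 := by
    intro k i
    obtain rfl | hik := eq_or_ne i k
    · simp
    · exact mul_nonneg (hcond i k hik) (sq_nonneg _)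
  have : 0 ≤ 2 * ∑ k, ∑ i, f i k :=
    hsymm ▸ sum_nonneg fun k _ => sum_nonneg fun i _ => hterm k i
  rw [hdiag]
  linarith

end RateForm

section SplitAt

variable {α β : Type*} [DecidableEq α] (l : α) (k : β) (g : {j // j ≠ l} → β)

@[simp]
theorem Equiv.funSplitAt_symm_apply_self : (Equiv.funSplitAt l β).symm (k, g) l = k := by
  simp [Equiv.funSplitAt_symm_apply]

@[simp]
theorem Equiv.update_funSplitAt_symm (i : β) :
    Function.update ((Equiv.funSplitAt l β).symm (k, g)) l i
      = (Equiv.funSplitAt l β).symm (i, g) := by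
  ext j
  by_cases h : j = l
  · subst h
    simp
  · simp [Equiv.funSplitAt_symm_apply, h]

theorem Equiv.prod_funSplitAt_symm {M : Type*} [CommMonoid M] [Fintype α] (f : β → M) :
    ∏ j, f ((Equiv.funSplitAt l β).symm (k, g) j) = f k * ∏ j, f (g j) := by
  rw [Fintype.prod_eq_mul_prod_subtype_ne _ l, Equiv.funSplitAt_symm_apply_self]
  congr 1
  exact prod_congr rfl fun j _ => by simp [Equiv.funSplitAt_symm_apply, j.2]

end SplitAt

theorem no_fisher_revival_many_copies_general (N n M : ℕ) [NeZero N]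
    (π : Fin N → ℝ) (hπpos : ∀ i, 0 < π i)
    (q : Fin M → ℝ) (hqpos : ∀ α, 0 < q α)
    (P : (Fin n → Fin N) → Fin M → ℝ)
    (hP : ∀ (js : Fin n → Fin N) (α : Fin M), P js α = (∏ l, π (js l)) * q α)
    (a : Fin N → Fin N → ℝ)
    (hpos : ∀ i j : Fin N, i ≠ j → (i, j) ≠ ((0 : Fin N), (1 : Fin N)) → 0 ≤ a i j)
    (hbal : 0 ≤ a 1 0 * π 0 + a 0 1 * π 1)
    (d : (Fin n → Fin N) × Fin M → ℝ) :
    0 ≤ ∑ l : Fin n, ∑ js : Fin n → Fin N,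
          ∑ i ∈ univ.filter (fun i => i ≠ js l), ∑ α : Fin M,
            a i (js l) *
              (d (Function.update js l i, α) / P (Function.update js l i) α
                - d (js, α) / P js α) ^ 2 * P js α := by
  refine sum_nonneg fun l _ => ?_
  rw [← (Equiv.funSplitAt l (Fin N)).symm.sum_comp, Fintype.sum_prod_type, sum_comm]
  refine sum_nonneg fun g _ => ?_
  simp only [Equiv.funSplitAt_symm_apply_self, Equiv.update_funSplitAt_symm]
  simp_rw [sum_comm (s := univ.filter _) (t := (univ : Finset (Fin M)))]
  rw [sum_comm]
  refine sum_nonneg fun α _ => ?_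
  set c := (∏ j, π (g j)) * q α
  have hc : 0 ≤ c := mul_nonneg (prod_nonneg fun j _ => (hπpos _).le) (hqpos α).le
  have hweight : ∀ k, P ((Equiv.funSplitAt l (Fin N)).symm (k, g)) α = π k * c := fun k => by
    rw [hP, Equiv.prod_funSplitAt_symm, mul_assoc]
  simp only [hweight]
  refine sum_rate_mul_sq_sub_nonneg a _ _ fun i k hik =>
    conductance_nonneg_of_balanced a _ 0 1 (fun k => mul_nonneg (hπpos k).le hc) hpos ?_ hik
  linarith [mul_nonneg hbal hc]

/-- Many-copy version of Theorem 2: `n` copies of the channel plus an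
ancilla still cannot witness the non-Markovian generator (with single negative rate
`a 0 1` balanced by `a 1 0 · π 0 + a 0 1 · π 1 ≥ 0`) via Fisher-distance revivals at
product points `π^{⊗n} ⊗ q`. -/
theorem no_fisher_revival_many_copies (N n M : ℕ) [NeZero N]
    (hN : 2 ≤ N) (hn : 1 ≤ n) (hM : 1 ≤ M)
    (π : Fin N → ℝ) (hπpos : ∀ i, 0 < π i) (hπsum : ∑ i, π i = 1)
    (q : Fin M → ℝ) (hqpos : ∀ α, 0 < q α) (hqsum : ∑ α, q α = 1)
    (P : (Fin n → Fin N) → Fin M → ℝ)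
    (hP : ∀ (js : Fin n → Fin N) (α : Fin M), P js α = (∏ l, π (js l)) * q α)
    (a : Fin N → Fin N → ℝ)
    (hneg : a 0 1 < 0)
    (hpos : ∀ i j : Fin N, i ≠ j → (i, j) ≠ ((0 : Fin N), (1 : Fin N)) → 0 ≤ a i j)
    (hbal : 0 ≤ a 1 0 * π 0 + a 0 1 * π 1)
    (d : (Fin n → Fin N) × Fin M → ℝ) :
    0 ≤ ∑ l : Fin n, ∑ js : Fin n → Fin N,
          ∑ i ∈ univ.filter (fun i => i ≠ js l), ∑ α : Fin M,
            a i (js l) *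
              (d (Function.update js l i, α) / P (Function.update js l i) α
                - d (js, α) / P js α) ^ 2 * P js α :=
  no_fisher_revival_many_copies_general N n M π hπpos q hqpos P hP a hpos hbal d
end

section
/- Let N ≥ 1 and let d : ℝ → (Fin N → ℝ) be such that each component t ↦ d_i(t) is differentiable at t₀ and d_i(t₀) ≠ 0 for every i. Define the fixed probability vector π by π_i = |d_i(t₀)| / (∑_j |d_j(t₀)|). Then the function f(t) = ∑_i d_i(t)² / π_i and the function g(t) = ( ∑_i |d_i(t)| )² are both differentiable at t₀ and f'(t₀) = g'(t₀). (Core computation of Theorem 3: after applying a filter that freezes the base point at |d|/‖d‖₁, the rate of change of the squared Fisher distance equals the rate of change of the squared trace distance, so trace-distance witnesses of non-Markovianity convert into Fisher-distance witnesses via post-processing.) -/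
open Finset

/-! Both derivatives are computed by the chain rule. At `t₀` the frozen weights are
`π i = |d i| / ‖d‖₁`, so each term `2 dᵢ dᵢ' / πᵢ` of `f'` equals `2 ‖d‖₁ sign(dᵢ) dᵢ'`, which is
the corresponding term of `g' = 2 ‖d‖₁ ∑ᵢ sign(dᵢ) dᵢ'`. -/

variable {ι : Type*} [Fintype ι]

theorem div_abs_div_eq_mul_sign {x : ℝ} (hx : x ≠ 0) (s : ℝ) :
    x / (|x| / s) = s * SignType.sign x := by
  rw [div_div_eq_mul_div, div_eq_iff (abs_ne_zero.2 hx), mul_assoc, sign_mul_abs, mul_comm]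

theorem hasDerivAt_sum_sq_div {d : ℝ → ι → ℝ} {d' : ι → ℝ} {t₀ : ℝ}
    (hd : ∀ i, HasDerivAt (fun t => d t i) (d' i) t₀) (π : ι → ℝ) :
    HasDerivAt (fun t => ∑ i, d t i ^ 2 / π i) (∑ i, 2 * d t₀ i * d' i / π i) t₀ :=
  HasDerivAt.fun_sum fun i _ => (((hd i).pow 2).div_const (π i)).congr_deriv (by norm_num)

theorem hasDerivAt_sq_sum_abs {d : ℝ → ι → ℝ} {d' : ι → ℝ} {t₀ : ℝ}
    (hd : ∀ i, HasDerivAt (fun t => d t i) (d' i) t₀) (hd0 : ∀ i, d t₀ i ≠ 0) :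
    HasDerivAt (fun t => (∑ i, |d t i|) ^ 2)
      (2 * (∑ i, |d t₀ i|) * ∑ i, SignType.sign (d t₀ i) * d' i) t₀ := by
  have hsum : HasDerivAt (fun t => ∑ i, |d t i|) (∑ i, SignType.sign (d t₀ i) * d' i) t₀ :=
    HasDerivAt.fun_sum fun i _ => (hasDerivAt_abs (hd0 i)).comp t₀ (hd i) (h₂ := fun x => |x|)
  exact (hsum.fun_pow 2).congr_deriv (by norm_num)

theorem sum_mul_div_abs_div_eq (x c : ι → ℝ) (hx : ∀ i, x i ≠ 0) :
    ∑ i, 2 * x i * c i / (|x i| / ∑ j, |x j|)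
      = 2 * (∑ j, |x j|) * ∑ i, SignType.sign (x i) * c i := by
  rw [mul_sum]
  refine sum_congr rfl fun i _ => ?_
  calc 2 * x i * c i / (|x i| / ∑ j, |x j|) = 2 * c i * (x i / (|x i| / ∑ j, |x j|)) := by ring
    _ = _ := by rw [div_abs_div_eq_mul_sign (hx i)]; ring

theorem frozen_fisher_matches_trace_derivative_general (N : ℕ)
    (d : ℝ → Fin N → ℝ) (t₀ : ℝ)
    (hdiff : ∀ i, DifferentiableAt ℝ (fun t => d t i) t₀)
    (hd0 : ∀ i, d t₀ i ≠ 0)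
    (π : Fin N → ℝ) (hπ : ∀ i, π i = |d t₀ i| / ∑ j, |d t₀ j|) :
    DifferentiableAt ℝ (fun t => ∑ i, (d t i) ^ 2 / π i) t₀ ∧
    DifferentiableAt ℝ (fun t => (∑ i, |d t i|) ^ 2) t₀ ∧
    deriv (fun t => ∑ i, (d t i) ^ 2 / π i) t₀
      = deriv (fun t => (∑ i, |d t i|) ^ 2) t₀ := by
  obtain rfl : π = fun i => |d t₀ i| / ∑ j, |d t₀ j| := funext hπ
  have hd i := (hdiff i).hasDerivAt
  have hf := hasDerivAt_sum_sq_div hd (fun i => |d t₀ i| / ∑ j, |d t₀ j|)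
  have hg := hasDerivAt_sq_sum_abs hd hd0
  refine ⟨hf.differentiableAt, hg.differentiableAt, ?_⟩
  rw [hf.deriv, hg.deriv]
  exact sum_mul_div_abs_div_eq _ _ hd0

/-- Core computation of Theorem 3: with the base point frozen at
`π = |d(t₀)| / ‖d(t₀)‖₁`, the squared Fisher distance `f(t) = ∑ i, d i(t)² / π i` and the
squared trace distance `g(t) = (∑ i, |d i(t)|)²` are both differentiable at `t₀` and have
equal derivatives there. -/
theorem frozen_fisher_matches_trace_derivative (N : ℕ) (hN : 1 ≤ N)
    (d : ℝ → Fin N → ℝ) (t₀ : ℝ)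
    (hdiff : ∀ i, DifferentiableAt ℝ (fun t => d t i) t₀)
    (hd0 : ∀ i, d t₀ i ≠ 0)
    (π : Fin N → ℝ) (hπ : ∀ i, π i = |d t₀ i| / ∑ j, |d t₀ j|) :
    DifferentiableAt ℝ (fun t => ∑ i, (d t i) ^ 2 / π i) t₀ ∧
    DifferentiableAt ℝ (fun t => (∑ i, |d t i|) ^ 2) t₀ ∧
    deriv (fun t => ∑ i, (d t i) ^ 2 / π i) t₀
      = deriv (fun t => (∑ i, |d t i|) ^ 2) t₀ :=
  frozen_fisher_matches_trace_derivative_general N d t₀ hdiff hd0 π hπ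
end

section
/- Let T ∈ ℝ^{N×N} be column-stochastic, π : Fin N → ℝ strictly positive with (T π)_j > 0 for all j, and T̂_{ij} = π_i T_{ji}/(T π)_j the Bayes-recovery matrix. Then for every d : Fin N → ℝ, ∑_i d_i · (d − T̂ T d)_i / π_i ≥ 0; that is, the operator I − T̂T is positive semidefinite with respect to the weighted inner product ⟨a,b⟩_π = (1/2)∑_i a_i b_i/π_i. -/
/-!
Expanding the quadratic form, the claim is `⟨d, T̂ T d⟩_π ≤ ⟨d, d⟩_π`. By Bayes' rule `T̂` is the
adjoint of `T` from the `π`-weighted to the `Tπ`-weighted inner product, so the left side equals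
`⟨T d, T d⟩_{Tπ}`; and Cauchy–Schwarz in each row of `T`, summed against the unit column sums,
shows that `T` contracts these weighted norms.
-/

open Finset Matrix

namespace Matrix

variable {ι κ : Type*} [Fintype ι]

noncomputable def bayesRecovery (T : Matrix κ ι ℝ) (π : ι → ℝ) : Matrix ι κ ℝ :=
  of fun i j => π i * T j i / (T *ᵥ π) j

theorem sum_mul_bayesRecovery_mulVec_div [Fintype κ] (T : Matrix κ ι ℝ) {π : ι → ℝ}
    (hπ : ∀ i, π i ≠ 0) (d : ι → ℝ) :
    ∑ i, d i * (bayesRecovery T π *ᵥ (T *ᵥ d)) i / π i = ∑ j, (T *ᵥ d) j ^ 2 / (T *ᵥ π) j := by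
  have hrow : ∀ i, d i * (bayesRecovery T π *ᵥ (T *ᵥ d)) i / π i
      = ∑ j, (T *ᵥ d) j / (T *ᵥ π) j * (T j i * d i) := by
    intro i
    simp only [mulVec, dotProduct, bayesRecovery, of_apply]
    rw [mul_sum, sum_div]
    refine sum_congr rfl fun j _ => ?_
    field_simp [hπ i]
  simp only [hrow]
  rw [sum_comm]
  refine sum_congr rfl fun j _ => ?_
  rw [← mul_sum, sq, div_mul_eq_mul_div]
  rfl

theorem mulVec_sq_le_mulVec_mul_sum (T : Matrix κ ι ℝ) (hT : ∀ j i, 0 ≤ T j i) {π : ι → ℝ}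
    (hπ : ∀ i, 0 < π i) (d : ι → ℝ) (j : κ) :
    (T *ᵥ d) j ^ 2 ≤ (T *ᵥ π) j * ∑ i, T j i * d i ^ 2 / π i :=
  sum_sq_le_sum_mul_sum_of_sq_le_mul univ
    (fun i _ => mul_nonneg (hT j i) (hπ i).le)
    (fun i _ => div_nonneg (mul_nonneg (hT j i) (sq_nonneg _)) (hπ i).le)
    (fun i _ => le_of_eq (by field_simp [(hπ i).ne']))

theorem sum_sq_mulVec_div_le [Fintype κ] (T : Matrix κ ι ℝ) (hT : ∀ j i, 0 ≤ T j i)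
    (hcol : ∀ i, ∑ j, T j i = 1) {π : ι → ℝ} (hπ : ∀ i, 0 < π i) (d : ι → ℝ) :
    ∑ j, (T *ᵥ d) j ^ 2 / (T *ᵥ π) j ≤ ∑ i, d i ^ 2 / π i := by
  have hTπ : ∀ j, 0 ≤ (T *ᵥ π) j := fun j =>
    sum_nonneg fun i _ => mul_nonneg (hT j i) (hπ i).le
  calc ∑ j, (T *ᵥ d) j ^ 2 / (T *ᵥ π) j
      ≤ ∑ j, ∑ i, T j i * d i ^ 2 / π i :=
        sum_le_sum fun j _ => div_le_of_le_mul₀ (hTπ j)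
          (sum_nonneg fun i _ => div_nonneg (mul_nonneg (hT j i) (sq_nonneg _)) (hπ i).le)
          ((mulVec_sq_le_mulVec_mul_sum T hT hπ d j).trans_eq (mul_comm _ _))
    _ = ∑ i, d i ^ 2 / π i := by
        rw [sum_comm]
        refine sum_congr rfl fun i _ => ?_
        rw [← sum_div, ← sum_mul, hcol i, one_mul]

end Matrix

theorem bayes_recovery_positive_semidefinite_general (N : ℕ)
    (T : Matrix (Fin N) (Fin N) ℝ)
    (hTnonneg : ∀ i j, 0 ≤ T i j) (hTcol : ∀ j, ∑ i, T i j = 1)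
    (π : Fin N → ℝ) (hπ : ∀ i, 0 < π i)
    (That : Matrix (Fin N) (Fin N) ℝ)
    (hThat : ∀ i j, That i j = π i * T j i / T.mulVec π j)
    (d : Fin N → ℝ) :
    0 ≤ ∑ i, d i * (d i - That.mulVec (T.mulVec d) i) / π i := by
  have hbayes : That = bayesRecovery T π := ext hThat
  have hexpand : ∑ i, d i * (d i - That.mulVec (T.mulVec d) i) / π i
      = ∑ i, d i ^ 2 / π i - ∑ i, d i * That.mulVec (T.mulVec d) i / π i := by
    rw [← sum_sub_distrib]
    exact sum_congr rfl fun i _ => by ring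
  rw [hexpand, hbayes, sum_mul_bayesRecovery_mulVec_div T (fun i => (hπ i).ne'), sub_nonneg]
  exact sum_sq_mulVec_div_le T hTnonneg hTcol hπ d

/-- The operator `I − T̂T` is positive semidefinite with respect to the
weighted inner product `⟨a,b⟩_π = (1/2)∑ i, a i b i / π i`. -/
theorem bayes_recovery_positive_semidefinite (N : ℕ)
    (T : Matrix (Fin N) (Fin N) ℝ)
    (hTnonneg : ∀ i j, 0 ≤ T i j) (hTcol : ∀ j, ∑ i, T i j = 1)
    (π : Fin N → ℝ) (hπ : ∀ i, 0 < π i) (hTπ : ∀ j, 0 < T.mulVec π j)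
    (That : Matrix (Fin N) (Fin N) ℝ)
    (hThat : ∀ i j, That i j = π i * T j i / T.mulVec π j)
    (d : Fin N → ℝ) :
    0 ≤ ∑ i, d i * (d i - That.mulVec (T.mulVec d) i) / π i :=
  bayes_recovery_positive_semidefinite_general N T hTnonneg hTcol π hπ That hThat d
end

section
/- Let R ∈ ℝ^{2×2} be the rate matrix with off-diagonal entries R_{01} = a and R_{10} = b and diagonal entries R_{00} = −b, R_{11} = −a, where a < 0 < b and b > −a. Then for every d : Fin 2 → ℝ with d_0 + d_1 = 0 and d_0 ≠ 0, one has ∑_i sign(d_i) · (R d)_i < 0, where (R d)_i = ∑_j R_{ij} d_j. (A non-Markovian two-state generator under which the trace distance between any two probability vectors strictly decreases: the trace distance cannot witness all non-Markovian classical evolutions without ancillas.) -/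
theorem Real.sign_mul_self_eq_abs (x : ℝ) : Real.sign x * x = |x| := by
  rcases lt_trichotomy x 0 with hx | rfl | hx
  · rw [Real.sign_of_neg hx, abs_of_neg hx, neg_one_mul]
  · simp
  · rw [Real.sign_of_pos hx, abs_of_pos hx, one_mul]

/-- Only the total rate `R 0 1 + R 1 0` enters, not the signs of the individual rates, so a
non-Markovian generator with positive total rate still contracts the trace distance. -/
theorem sum_sign_mul_mulVec_of_sum_col_eq_zero (R : Matrix (Fin 2) (Fin 2) ℝ)
    (hR : ∀ j, ∑ i, R i j = 0) (d : Fin 2 → ℝ) (hd : d 0 + d 1 = 0) :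
    ∑ i, Real.sign (d i) * R.mulVec d i = -(R 0 1 + R 1 0) * ∑ i, |d i| := by
  have hR0 : R 0 0 = -R 1 0 := by linarith [(Fin.sum_univ_two _).symm.trans (hR 0)]
  have hR1 : R 1 1 = -R 0 1 := by linarith [(Fin.sum_univ_two _).symm.trans (hR 1)]
  have hd1 : d 1 = -d 0 := by linarith
  simp only [Fin.sum_univ_two, Matrix.mulVec, dotProduct, hR0, hR1, hd1, Real.sign_neg,
    ← Real.sign_mul_self_eq_abs]
  ring

theorem nonMarkovian_two_state_trace_contraction_general (a b : ℝ)
    (hab : b > -a)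
    (R : Matrix (Fin 2) (Fin 2) ℝ)
    (hR : R = !![-b, a; b, -a])
    (d : Fin 2 → ℝ) (hd0 : d 0 + d 1 = 0) (hd : d 0 ≠ 0) :
    ∑ i, Real.sign (d i) * R.mulVec d i < 0 := by
  have hcol : ∀ j, ∑ i, R i j = 0 := by
    intro j
    fin_cases j <;> simp [hR, Fin.sum_univ_two]
  have hnorm : 0 < ∑ i, |d i| := by
    rw [Fin.sum_univ_two]
    exact add_pos_of_pos_of_nonneg (abs_pos.mpr hd) (abs_nonneg _)
  have hrate : 0 < R 0 1 + R 1 0 := by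
    simp only [hR, Matrix.of_apply, Matrix.cons_val_zero, Matrix.cons_val_one]
    linarith
  rw [sum_sign_mul_mulVec_of_sum_col_eq_zero R hcol d hd0, neg_mul]
  exact neg_neg_of_pos (mul_pos hrate hnorm)

/-- A non-Markovian two-state generator (rate `a = a_{1←2} < 0`, `b > -a`)
under which the trace distance between any two probability vectors strictly decreases:
the trace distance cannot witness all non-Markovian classical evolutions without
ancillas. -/
theorem nonMarkovian_two_state_trace_contraction (a b : ℝ)
    (ha : a < 0) (hb : 0 < b) (hab : b > -a)
    (R : Matrix (Fin 2) (Fin 2) ℝ)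
    (hR : R = !![-b, a; b, -a])
    (d : Fin 2 → ℝ) (hd0 : d 0 + d 1 = 0) (hd : d 0 ≠ 0) :
    ∑ i, Real.sign (d i) * R.mulVec d i < 0 :=
  nonMarkovian_two_state_trace_contraction_general a b hab R hR d hd0 hd
end

section
/- Let R ∈ ℝ^{N×N} have zero column sums (∑_i R_{ij} = 0 for all j) and suppose R_{i₀ j₀} < 0 for some i₀ ≠ j₀. Then there exist a vector d : Fin N × Fin 2 → ℝ with ∑_{i,α} d_{(i,α)} = 0 and a constant δ₀ > 0 such that for all 0 < δt ≤ δ₀, ∑_{i,α} | d_{(i,α)} + δt · ∑_j R_{ij} d_{(j,α)} | > ∑_{i,α} | d_{(i,α)} |. (Lemma 1, classical infinitesimal version: attaching a two-dimensional ancilla on which the dynamics acts trivially, every non-Markovian classical generator is witnessed by a strict revival of the trace distance between suitably prepared states.) -/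
/-!
Take `d = e_{j₀} ⊗ (1, -1)`: the ancilla makes its total sum vanish, and since the dynamics acts
trivially on the ancilla, `(I + δt R) d = (e_{j₀} + δt R e_{j₀}) ⊗ (1, -1)`, so both trace norms
factor through `‖(1, -1)‖₁ = 2`. Zero column sums keep the total mass of
`e_{j₀} + δt R e_{j₀}` equal to `1`, while its entry `δt R_{i₀ j₀}` is negative, so its `ℓ¹`-norm
exceeds `1 = ‖e_{j₀}‖₁` for every `δt > 0`.
-/

open Finset Matrix

section

variable {ι κ : Type*} [Fintype ι]

theorem sum_lt_sum_abs_of_neg {x : ι → ℝ} {k : ι} (hk : x k < 0) : ∑ i, x i < ∑ i, |x i| :=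
  sum_lt_sum (fun i _ => le_abs_self (x i)) ⟨k, mem_univ k, by rw [abs_of_neg hk]; linarith⟩

theorem sum_prod_mul [Fintype κ] (u : ι → ℝ) (v : κ → ℝ) :
    ∑ x : ι × κ, u x.1 * v x.2 = (∑ i, u i) * ∑ a, v a := by
  rw [Fintype.sum_prod_type, Fintype.sum_mul_sum]

theorem sum_abs_prod_mul [Fintype κ] (u : ι → ℝ) (v : κ → ℝ) :
    ∑ x : ι × κ, |u x.1 * v x.2| = (∑ i, |u i|) * ∑ a, |v a| := by
  simp only [abs_mul]
  exact sum_prod_mul (fun i => |u i|) fun a => |v a|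

theorem mul_add_sum_mul_mul_eq (R : Matrix ι ι ℝ) (u : ι → ℝ) (v : κ → ℝ) (δ : ℝ) (x : ι × κ) :
    u x.1 * v x.2 + δ * ∑ j, R x.1 j * (u j * v x.2) = (u x.1 + δ * (R *ᵥ u) x.1) * v x.2 := by
  simp only [add_mul, mul_assoc, mulVec, dotProduct, sum_mul]

theorem sum_mulVec_eq_zero {R : Matrix ι ι ℝ} (hcol : ∀ j, ∑ i, R i j = 0) (u : ι → ℝ) :
    ∑ i, (R *ᵥ u) i = 0 := by
  simp only [mulVec, dotProduct]
  rw [sum_comm]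
  simp [← sum_mul, hcol]

theorem sum_add_mul_mulVec {R : Matrix ι ι ℝ} (hcol : ∀ j, ∑ i, R i j = 0) (u : ι → ℝ)
    (δ : ℝ) : ∑ i, (u i + δ * (R *ᵥ u) i) = ∑ i, u i := by
  rw [sum_add_distrib, ← mul_sum, sum_mulVec_eq_zero hcol, mul_zero, add_zero]

end

/-- Lemma 1, classical infinitesimal version: with a two-dimensional
ancilla on which the dynamics acts trivially, every non-Markovian classical generator
(some negative off-diagonal rate) is witnessed by a strict revival of the trace distance
between suitably prepared states. -/
theorem ancilla_trace_distance_witness (N : ℕ)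
    (R : Matrix (Fin N) (Fin N) ℝ)
    (hcol : ∀ j, ∑ i, R i j = 0)
    (i₀ j₀ : Fin N) (hij : i₀ ≠ j₀) (hneg : R i₀ j₀ < 0) :
    ∃ (d : Fin N × Fin 2 → ℝ),
      (∑ x : Fin N × Fin 2, d x = 0) ∧
      ∃ δ₀ > (0 : ℝ), ∀ δt : ℝ, 0 < δt → δt ≤ δ₀ →
        ∑ x : Fin N × Fin 2, |d x| <
          ∑ x : Fin N × Fin 2, |d x + δt * ∑ j, R x.1 j * d (j, x.2)| := by
  set u : Fin N → ℝ := Pi.single j₀ 1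
  set v : Fin 2 → ℝ := ![1, -1]
  refine ⟨fun x => u x.1 * v x.2, ?_, 1, one_pos, fun δt hδt _ => ?_⟩
  · simp [sum_prod_mul, v]
  have hu_abs : ∑ i, |u i| = 1 := by simp [u, Pi.single_apply, apply_ite]
  have hv_abs : ∑ a, |v a| = 2 := by norm_num [v]
  have hevolved : 1 < ∑ i, |u i + δt * (R *ᵥ u) i| := by
    have hmass : ∑ i, (u i + δt * (R *ᵥ u) i) = 1 := by
      rw [sum_add_mul_mulVec hcol]; simp [u]
    have hentry : u i₀ + δt * (R *ᵥ u) i₀ < 0 := by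
      simpa [u, mulVec_single_one, hij] using mul_neg_of_pos_of_neg hδt hneg
    exact hmass ▸ sum_lt_sum_abs_of_neg hentry
  calc ∑ x : Fin N × Fin 2, |u x.1 * v x.2| = 1 * 2 := by rw [sum_abs_prod_mul, hu_abs, hv_abs]
    _ < (∑ i, |u i + δt * (R *ᵥ u) i|) * ∑ a, |v a| := by rw [hv_abs]; gcongr
    _ = _ := by simp only [mul_add_sum_mul_mul_eq]; exact (sum_abs_prod_mul _ v).symm
end
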